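/- In an implicative algebra compatible with joins, the second-order encoding of existential quantification is logically equivalent to the supremum: ⋀_{(b_i)}((⋁_{i∈I} b_i) → ⟆∃_{i∈I} b_i) ∈ Σ, where the outer meet ranges over all I-indexed families; moreover ⋀_{(b_i)}((⟆∃_{i∈I} b_i) → ⋁_{i∈I} b_i) ∈ Σ holds in any implicative algebra. -/

import Mathlib

universe u v

/-- An implicative algebra: a complete lattice with an implication antitone in the
first argument, monotone in the second, distributing over arbitrary meets in the
second argument, together with a separator `Sep` which is upward closed, closed
under modus ponens, and contains the combinators K and S. -/
structure ImplicativeAlgebra (A : Type u) [CompleteLattice A] where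
  imp : A → A → A
  imp_anti : ∀ ⦃a a' b : A⦄, a ≤ a' → imp a' b ≤ imp a b
  imp_mono : ∀ ⦃a b b' : A⦄, b ≤ b' → imp a b ≤ imp a b'
  imp_sInf : ∀ (a : A) (S : Set A), imp a (sInf S) = ⨅ b ∈ S, imp a b
  Sep : Set A
  sep_upward : ∀ ⦃a b : A⦄, a ∈ Sep → a ≤ b → b ∈ Sep
  sep_mp : ∀ ⦃a b : A⦄, imp a b ∈ Sep → a ∈ Sep → b ∈ Sep
  sep_K : (⨅ a : A, ⨅ b : A, imp a (imp b a)) ∈ Sep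
  sep_S : (⨅ a : A, ⨅ b : A, ⨅ c : A,
      imp (imp a (imp b c)) (imp (imp a b) (imp a c))) ∈ Sep

namespace ImplicativeAlgebra

variable {A : Type u} [CompleteLattice A] (𝔸 : ImplicativeAlgebra A)

/-- Application: `a · b := ⋀ {x | a ≤ b → x}`. -/
def app (a b : A) : A := sInf {x : A | a ≤ 𝔸.imp b x}

/-- Implicative conjunction `a × b`. -/
def itimes (a b : A) : A := ⨅ x : A, 𝔸.imp (𝔸.imp a (𝔸.imp b x)) x

/-- Implicative disjunction `a + b`. -/
def iplus (a b : A) : A := ⨅ x : A, 𝔸.imp (𝔸.imp a x) (𝔸.imp (𝔸.imp b x) x)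

/-- Second-order encoding of the existential quantifier. -/
def iexists {ι : Sort v} (f : ι → A) : A := ⨅ x : A, 𝔸.imp (⨅ i, 𝔸.imp (f i) x) x

/-- Encoding of k = λx.λy.x. -/
def kComb : A := ⨅ a : A, 𝔸.imp a (⨅ b : A, 𝔸.imp b a)

/-- Encoding of λx.λy.y. -/
def kbarComb : A := ⨅ a : A, 𝔸.imp a (⨅ b : A, 𝔸.imp b b)

/-- Encoding of the pairing combinator p = λx.λy.λz.zxy. -/
def pComb : A := ⨅ a : A, 𝔸.imp a (⨅ b : A, 𝔸.imp b (⨅ c : A, 𝔸.imp c (𝔸.app (𝔸.app c a) b)))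

/-- Encoding of the first projection p₁ = λu.u k. -/
def p1Comb : A := ⨅ u : A, 𝔸.imp u (𝔸.app u 𝔸.kComb)

/-- Encoding of the second projection p₂ = λv.v k̄. -/
def p2Comb : A := ⨅ u : A, 𝔸.imp u (𝔸.app u 𝔸.kbarComb)

/-- Encoding of the existential-introduction combinator e = λx.λz.zx. -/
def eComb : A := ⨅ a : A, 𝔸.imp a (⨅ c : A, 𝔸.imp c (𝔸.app c a))

end ImplicativeAlgebra

/-!
A proof `a` of `f i` yields a proof of `iexists f` by the realizer `λa.λc. c a`; compatibility
with joins turns the family of these implications into `(⨆ i, f i) → iexists f`. Conversely,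
`λu. u I` sends `iexists f` to `⨆ i, f i`, since the identity `I` realizes each `f j → ⨆ i, f i`.
-/

namespace ImplicativeAlgebra

variable {A : Type u} [CompleteLattice A] (𝔸 : ImplicativeAlgebra A)

lemma imp_iInf {ι : Sort*} (a : A) (g : ι → A) :
    𝔸.imp a (⨅ i, g i) = ⨅ i, 𝔸.imp a (g i) := by
  rw [iInf, 𝔸.imp_sInf, iInf_range]

lemma le_imp_app (t a : A) : t ≤ 𝔸.imp a (𝔸.app t a) := by
  rw [app, 𝔸.imp_sInf]
  exact le_iInf₂ fun _ hx => hx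

lemma app_le {t a a' b : A} (ht : t ≤ 𝔸.imp a b) (ha : a' ≤ a) : 𝔸.app t a' ≤ b :=
  sInf_le (ht.trans (𝔸.imp_anti ha))

lemma app_mem_sep {t a : A} (ht : t ∈ 𝔸.Sep) (ha : a ∈ 𝔸.Sep) : 𝔸.app t a ∈ 𝔸.Sep :=
  𝔸.sep_mp (𝔸.sep_upward ht (𝔸.le_imp_app t a)) ha

lemma exists_K : ∃ k ∈ 𝔸.Sep, ∀ a b, k ≤ 𝔸.imp a (𝔸.imp b a) :=
  ⟨_, 𝔸.sep_K, fun a b => (iInf_le _ a).trans (iInf_le _ b)⟩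

lemma exists_S : ∃ s ∈ 𝔸.Sep, ∀ a b c,
    s ≤ 𝔸.imp (𝔸.imp a (𝔸.imp b c)) (𝔸.imp (𝔸.imp a b) (𝔸.imp a c)) :=
  ⟨_, 𝔸.sep_S, fun a b c => ((iInf_le _ a).trans (iInf_le _ b)).trans (iInf_le _ c)⟩

-- The witness is `S K K`.
lemma exists_I : ∃ i ∈ 𝔸.Sep, ∀ a, i ≤ 𝔸.imp a a := by
  obtain ⟨k, hk, hkle⟩ := 𝔸.exists_K
  obtain ⟨s, hs, hsle⟩ := 𝔸.exists_S
  refine ⟨𝔸.app (𝔸.app s k) k, 𝔸.app_mem_sep (𝔸.app_mem_sep hs hk) hk, fun a => ?_⟩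
  exact 𝔸.app_le (𝔸.app_le (hsle a (𝔸.imp a a) a) (hkle _ _)) (hkle a a)

-- The witness is `S (K (S I)) K`, which reduces to `λa.λc. c a`.
lemma exists_T : ∃ e ∈ 𝔸.Sep, ∀ a x, e ≤ 𝔸.imp a (𝔸.imp (𝔸.imp a x) x) := by
  obtain ⟨k, hk, hkle⟩ := 𝔸.exists_K
  obtain ⟨s, hs, hsle⟩ := 𝔸.exists_S
  obtain ⟨i, hi, hile⟩ := 𝔸.exists_I
  refine ⟨𝔸.app (𝔸.app s (𝔸.app k (𝔸.app s i))) k,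
    𝔸.app_mem_sep (𝔸.app_mem_sep hs (𝔸.app_mem_sep hk (𝔸.app_mem_sep hs hi))) hk,
    fun a x => ?_⟩
  have hSI : 𝔸.app s i ≤ 𝔸.imp (𝔸.imp (𝔸.imp a x) a) (𝔸.imp (𝔸.imp a x) x) :=
    𝔸.app_le (hsle _ a x) (hile _)
  have hKSI := 𝔸.app_le (hkle _ a) hSI
  exact 𝔸.app_le (𝔸.app_le (hsle a _ _) hKSI) (hkle a (𝔸.imp a x))

lemma sep_I : (⨅ a, 𝔸.imp a a) ∈ 𝔸.Sep := by
  obtain ⟨i, hi, hile⟩ := 𝔸.exists_I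
  exact 𝔸.sep_upward hi (le_iInf hile)

lemma sep_T : (⨅ a, ⨅ x, 𝔸.imp a (𝔸.imp (𝔸.imp a x) x)) ∈ 𝔸.Sep := by
  obtain ⟨e, he, hele⟩ := 𝔸.exists_T
  exact 𝔸.sep_upward he (le_iInf₂ hele)

lemma iInf_imp_imp_mem_sep {a : A} (ha : a ∈ 𝔸.Sep) :
    (⨅ x, 𝔸.imp (𝔸.imp a x) x) ∈ 𝔸.Sep := by
  refine 𝔸.sep_mp (𝔸.sep_upward 𝔸.sep_T ?_) ha
  rw [𝔸.imp_iInf]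
  exact iInf_le _ a

lemma iInf_imp_imp_le_imp_iexists {ι : Sort*} (f : ι → A) (i : ι) :
    (⨅ a, ⨅ x, 𝔸.imp a (𝔸.imp (𝔸.imp a x) x)) ≤ 𝔸.imp (f i) (𝔸.iexists f) := by
  rw [iexists, 𝔸.imp_iInf]
  exact le_iInf fun x => ((iInf_le _ (f i)).trans (iInf_le _ x)).trans
    (𝔸.imp_mono (𝔸.imp_anti (iInf_le (fun j => 𝔸.imp (f j) x) i)))

lemma iexists_le_imp_iSup {ι : Sort*} (f : ι → A) :
    𝔸.iexists f ≤ 𝔸.imp (⨅ a, 𝔸.imp a a) (⨆ i, f i) := by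
  have hI : (⨅ a, 𝔸.imp a a) ≤ ⨅ j, 𝔸.imp (f j) (⨆ i, f i) :=
    le_iInf fun j => (iInf_le _ _).trans (𝔸.imp_anti (le_iSup f j))
  exact (iInf_le _ (⨆ i, f i)).trans (𝔸.imp_anti hI)

lemma iInf_imp_iSup_iexists_mem_sep {ι : Sort*}
    (hcj : ∀ (f : ι → A) (b : A), (⨅ i, 𝔸.imp (f i) b) = 𝔸.imp (⨆ i, f i) b) :
    (⨅ f : ι → A, 𝔸.imp (⨆ i, f i) (𝔸.iexists f)) ∈ 𝔸.Sep := by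
  refine 𝔸.sep_upward 𝔸.sep_T (le_iInf fun f => ?_)
  rw [← hcj]
  exact le_iInf (𝔸.iInf_imp_imp_le_imp_iexists f)

lemma iInf_imp_iexists_iSup_mem_sep (ι : Sort*) :
    (⨅ f : ι → A, 𝔸.imp (𝔸.iexists f) (⨆ i, f i)) ∈ 𝔸.Sep :=
  𝔸.sep_upward (𝔸.iInf_imp_imp_mem_sep 𝔸.sep_I)
    (le_iInf fun f => (iInf_le _ (⨆ i, f i)).trans (𝔸.imp_anti (𝔸.iexists_le_imp_iSup f)))

end ImplicativeAlgebra

/-- in an implicative algebra compatible with joins, the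
second-order encoding of the existential quantifier is logically equivalent to
the supremum (the second implication holding in any implicative algebra). -/
theorem iexists_equiv_iSup {A : Type u} [CompleteLattice A]
    (𝔸 : ImplicativeAlgebra A) (I : Type v)
    (hcj : ∀ (ι : Type v) (f : ι → A) (b : A),
      (⨅ i, 𝔸.imp (f i) b) = 𝔸.imp (⨆ i, f i) b) :
    ((⨅ f : I → A, 𝔸.imp (⨆ i, f i) (𝔸.iexists f)) ∈ 𝔸.Sep) ∧
      ((⨅ f : I → A, 𝔸.imp (𝔸.iexists f) (⨆ i, f i)) ∈ 𝔸.Sep) :=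
  ⟨𝔸.iInf_imp_iSup_iexists_mem_sep (hcj I), 𝔸.iInf_imp_iexists_iSup_mem_sep I⟩
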